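/- If α is a Salem number with minimal polynomial P_α over ℚ, then P_α(-X²) is (up to sign/normalization) the minimal polynomial of a complex Salem number β with |β|² = α, and in particular M(P_α(-X²)) = M(P_α). -/

import Mathlib

/-- Mahler measure of a complex polynomial. -/
noncomputable def mahlerMeasure (P : Polynomial ℂ) : ℝ :=
  (P.roots.map (fun z => max 1 (‖z‖))).prod

/-- A Salem number: a real algebraic integer `α > 1` all of whose other complex
conjugates have absolute value ≤ 1, with at least one of absolute value 1. -/
def IsSalemNumber (α : ℝ) : Prop :=
  1 < α ∧ IsIntegral ℤ α ∧
  (∀ z ∈ ((minpoly ℚ α).map (algebraMap ℚ ℂ)).roots, z ≠ (α : ℂ) → ‖z‖ ≤ 1) ∧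
  (∃ z ∈ ((minpoly ℚ α).map (algebraMap ℚ ℂ)).roots, ‖z‖ = 1)

/-- A complex Salem number: a non-real algebraic integer `β` such that `β` and its
complex conjugate are the only conjugates of absolute value > 1, with at least one
conjugate of absolute value 1. -/
def IsComplexSalemNumber (β : ℂ) : Prop :=
  β.im ≠ 0 ∧ IsIntegral ℤ β ∧
  (∀ z ∈ ((minpoly ℚ β).map (algebraMap ℚ ℂ)).roots,
      1 < ‖z‖ → z = β ∨ z = (starRingEnd ℂ) β) ∧
  (∃ z ∈ ((minpoly ℚ β).map (algebraMap ℚ ℂ)).roots, ‖z‖ = 1)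

/-! Put β = i√α, so that β² = -α. The roots of P(-X²) are the square roots of the negatives of
the roots of P; hence ±β are its only roots outside the closed unit disc, square roots of
unimodular roots of P are unimodular roots of P(-X²), and root by root
max(1, |√(-a)|)² = max(1, |a|), which gives equality of the Mahler measures.

A unimodular root z of P has z⁻¹ = z̄ as a root, so P divides its reverse; as P(±1) ≠ 0 this
forces deg P to be even, so P(-X²) is monic. Finally ℚ(β) strictly contains the real field ℚ(α)
while [ℚ(β) : ℚ] ≤ deg P(-X²) = 2 [ℚ(α) : ℚ], so P(-X²) is the minimal polynomial of β. -/

section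

open Polynomial Module IntermediateField

namespace Polynomial

section CommRing

variable {R : Type*} [CommRing R] [IsDomain R]

theorem natDegree_neg_X_sq : (-X ^ 2 : R[X]).natDegree = 2 := by
  rw [natDegree_neg, natDegree_X_pow]

theorem natDegree_comp_neg_X_sq (p : R[X]) : (p.comp (-X ^ 2)).natDegree = 2 * p.natDegree := by
  rw [natDegree_comp, natDegree_neg_X_sq, mul_comm]

theorem leadingCoeff_comp_neg_X_sq (p : R[X]) :
    (p.comp (-X ^ 2)).leadingCoeff = p.leadingCoeff * (-1) ^ p.natDegree := by
  rw [leadingCoeff_comp (by rw [natDegree_neg_X_sq]; norm_num), leadingCoeff_neg,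
    leadingCoeff_X_pow]

theorem comp_neg_X_sq_ne_zero {p : R[X]} (hp : p ≠ 0) : p.comp (-X ^ 2) ≠ 0 := by
  rw [← leadingCoeff_ne_zero, leadingCoeff_comp_neg_X_sq]
  exact mul_ne_zero (leadingCoeff_ne_zero.mpr hp) (pow_ne_zero _ (neg_ne_zero.mpr one_ne_zero))

theorem Monic.comp_neg_X_sq {p : R[X]} (hp : p.Monic) (hn : Even p.natDegree) :
    (p.comp (-X ^ 2)).Monic := by
  rw [Monic, leadingCoeff_comp_neg_X_sq, hp.leadingCoeff, hn.neg_one_pow, mul_one]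

theorem even_natDegree_of_dvd_reverse (hR : (-1 : R) ≠ 1) {p : R[X]} (hdvd : p ∣ p.reverse)
    (h1 : p.eval 1 ≠ 0) (hm1 : p.eval (-1) ≠ 0) : Even p.natDegree := by
  obtain ⟨q, hq⟩ := hdvd
  have hp : p ≠ 0 := by rintro rfl; simp at h1
  have hq0 : q ≠ 0 := by rintro rfl; simp_all
  have hqdeg : q.natDegree = 0 := by
    have := reverse_natDegree_le p
    rw [hq, natDegree_mul hp hq0] at this
    omega
  rw [eq_C_of_natDegree_eq_zero hqdeg] at hq
  have eval_reverse (u : Rˣ) :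
      p.eval ↑u⁻¹ * q.coeff 0 * (u : R) ^ p.natDegree = p.eval (u : R) := by
    let := u.invertible
    have := eval₂_reverse_mul_pow (RingHom.id R) (u : R) p
    rwa [hq, eval₂_mul, eval₂_C, eval₂_id, eval₂_id, invOf_units] at this
  have hc : q.coeff 0 = 1 := by
    have := eval_reverse 1
    simp only [inv_one, Units.val_one, one_pow, mul_one] at this
    exact (mul_right_injective₀ h1).eq_iff.mp (by rw [this, mul_one])
  have := eval_reverse (-1)
  simp only [inv_neg, inv_one, Units.val_neg, Units.val_one, hc, mul_one] at this
  exact (neg_one_pow_eq_one_iff_even hR).mp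
    ((mul_right_injective₀ hm1).eq_iff.mp (by rw [this, mul_one]))

end CommRing

theorem aeval_conj_rat (p : ℚ[X]) (z : ℂ) :
    aeval (starRingEnd ℂ z) p = starRingEnd ℂ (aeval z p) :=
  aeval_algHom_apply (starRingEnd ℂ).toRatAlgHom z p

theorem mem_roots_map_comp_neg_X_sq {K L : Type*} [Field K] [CommRing L] [IsDomain L]
    [Algebra K L] {p : K[X]} (hp : p ≠ 0) {w : L} :
    w ∈ ((p.comp (-X ^ 2)).map (algebraMap K L)).roots ↔
      -w ^ 2 ∈ (p.map (algebraMap K L)).roots := by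
  rw [mem_roots_map (comp_neg_X_sq_ne_zero hp), mem_roots_map hp, ← aeval_def, ← aeval_def,
    aeval_comp, map_neg, map_pow, aeval_X]

theorem mahlerMeasure_X_sub_C_comp_neg_X_sq (a : ℂ) :
    ((X - C a).comp (-X ^ 2)).mahlerMeasure = max 1 ‖a‖ := by
  obtain ⟨s, hs⟩ := IsAlgClosed.exists_pow_nat_eq (-a) two_pos
  have hfactor : (X - C a).comp (-X ^ 2) = C (-1) * ((X - C s) * (X + C s)) := by
    have : C a = -C s ^ 2 := by rw [← map_pow, hs, map_neg, neg_neg]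
    rw [sub_comp, X_comp, C_comp, this]
    simp only [map_neg, map_one]
    ring
  have hnorm : ‖a‖ = ‖s‖ ^ 2 := by rw [← norm_pow, hs, norm_neg]
  rw [hfactor, mahlerMeasure_mul, mahlerMeasure_mul, mahlerMeasure_const, mahlerMeasure_X_sub_C,
    mahlerMeasure_X_add_C, norm_neg, norm_one, one_mul, hnorm]
  rcases le_total ‖s‖ 1 with hs1 | hs1
  · rw [max_eq_left hs1, max_eq_left (pow_le_one₀ (norm_nonneg s) hs1), one_mul]
  · rw [max_eq_right hs1, max_eq_right (one_le_pow₀ hs1), sq]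

theorem mahlerMeasure_comp_neg_X_sq (p : ℂ[X]) :
    (p.comp (-X ^ 2)).mahlerMeasure = p.mahlerMeasure := by
  conv_lhs => rw [(IsAlgClosed.splits p).eq_prod_roots]
  rw [mul_comp, C_comp, multiset_prod_comp, mahlerMeasure_mul, mahlerMeasure_const,
    prod_mahlerMeasure_eq_mahlerMeasure_prod, Multiset.map_map, Multiset.map_map,
    mahlerMeasure_eq_leadingCoeff_mul_prod_roots]
  simp only [Function.comp_def, mahlerMeasure_X_sub_C_comp_neg_X_sq]

end Polynomial

theorem mahlerMeasure_eq_polynomial_mahlerMeasure_of_monic {p : ℂ[X]} (hp : p.Monic) :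
    _root_.mahlerMeasure p = p.mahlerMeasure := by
  rw [Polynomial.mahlerMeasure_eq_leadingCoeff_mul_prod_roots, hp.leadingCoeff, norm_one,
    one_mul, _root_.mahlerMeasure]

theorem minpoly.dvd_reverse {K L : Type*} [Field K] [Field L] [Algebra K L] {x : L} (hx : x ≠ 0)
    (hinv : Polynomial.aeval x⁻¹ (minpoly K x) = 0) : minpoly K x ∣ (minpoly K x).reverse := by
  apply minpoly.dvd
  let : Invertible x⁻¹ := invertibleOfNonzero (inv_ne_zero hx)
  have := (eval₂_reverse_eq_zero_iff (algebraMap K L) x⁻¹ (minpoly K x)).mpr hinv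
  rwa [invOf_eq_inv, inv_inv] at this

theorem IntermediateField.finrank_eq_two_mul_of_lt {K L : Type*} [Field K] [Field L]
    [Algebra K L] {E F : IntermediateField K L} [FiniteDimensional K F] (hlt : E < F)
    (hle : finrank K F ≤ 2 * finrank K E) : finrank K F = 2 * finrank K E := by
  have htower := finrank_bot_mul_relfinrank hlt.le
  have hrel : E.relfinrank F ≠ 1 := relfinrank_eq_one_iff.not.mpr hlt.not_ge
  have hF : 0 < finrank K F := finrank_pos
  rcases hk : E.relfinrank F with _ | _ | k
  · simp_all
  · simp_all
  · rw [hk] at htower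
    nlinarith

theorem Complex.notMem_adjoin_ofReal {x : ℝ} {z : ℂ} (hz : z.im ≠ 0) : z ∉ ℚ⟮(x : ℂ)⟯ := by
  intro hmem
  have hreal : ℚ⟮(x : ℂ)⟯ ≤ Complex.ofRealHom.toRatAlgHom.fieldRange :=
    adjoin_simple_le_iff.mpr ⟨x, rfl⟩
  obtain ⟨r, rfl⟩ := hreal hmem
  exact hz (Complex.ofReal_im r)

theorem Complex.ofReal_sqrt_mul_I_sq {x : ℝ} (hx : 0 ≤ x) : ((√x : ℂ) * Complex.I) ^ 2 = -x := by
  rw [mul_pow, Complex.I_sq, ← Complex.ofReal_pow, Real.sq_sqrt hx, mul_neg_one]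

namespace IsSalemNumber

variable {α : ℝ}

theorem isIntegral_rat (h : IsSalemNumber α) : IsIntegral ℚ α := h.2.1.tower_top

theorem minpoly_eval_ne_zero (h : IsSalemNumber α) {r : ℚ} (hr : (r : ℝ) ≠ α) :
    (minpoly ℚ α).eval r ≠ 0 :=
  fun hroot => hr (minpoly.root h.isIntegral_rat hroot)

theorem minpoly_dvd_reverse (h : IsSalemNumber α) : minpoly ℚ α ∣ (minpoly ℚ α).reverse := by
  obtain ⟨z, hz, hz1⟩ := h.2.2.2
  have hP0 := minpoly.ne_zero h.isIntegral_rat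
  have hzroot : aeval z (minpoly ℚ α) = 0 := by rwa [mem_roots_map hP0, ← aeval_def] at hz
  have hmin : minpoly ℚ z = minpoly ℚ α :=
    (minpoly.eq_of_irreducible_of_monic (minpoly.irreducible h.isIntegral_rat) hzroot
      (minpoly.monic h.isIntegral_rat)).symm
  rw [← hmin]
  refine minpoly.dvd_reverse (norm_ne_zero_iff.mp (by rw [hz1]; exact one_ne_zero)) ?_
  rw [RCLike.inv_eq_conj hz1, hmin, aeval_conj_rat, hzroot, map_zero]

theorem even_natDegree_minpoly (h : IsSalemNumber α) : Even (minpoly ℚ α).natDegree :=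
  even_natDegree_of_dvd_reverse (by norm_num) h.minpoly_dvd_reverse
    (h.minpoly_eval_ne_zero (by push_cast; linarith [h.1]))
    (h.minpoly_eval_ne_zero (by push_cast; linarith [h.1]))

theorem isIntegral_sqrt_mul_I (h : IsSalemNumber α) : IsIntegral ℤ ((√α : ℂ) * Complex.I) := by
  refine IsIntegral.of_pow two_pos ?_
  rw [Complex.ofReal_sqrt_mul_I_sq (by linarith [h.1])]
  exact (h.2.1.map (Complex.ofRealHom.toIntAlgHom)).neg

theorem minpoly_sqrt_mul_I (h : IsSalemNumber α) :
    minpoly ℚ ((√α : ℂ) * Complex.I) = (minpoly ℚ α).comp (-X ^ 2) := by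
  set β : ℂ := (√α : ℂ) * Complex.I
  have hβsq : β ^ 2 = -α := Complex.ofReal_sqrt_mul_I_sq (by linarith [h.1])
  have hβ : IsIntegral ℚ β := h.isIntegral_sqrt_mul_I.tower_top
  have hα : IsIntegral ℚ (α : ℂ) := (h.2.1.map Complex.ofRealHom.toIntAlgHom).tower_top
  have hP0 := minpoly.ne_zero h.isIntegral_rat
  have hdvd : minpoly ℚ β ∣ (minpoly ℚ α).comp (-X ^ 2) := by
    refine minpoly.dvd ℚ β ?_
    rw [aeval_comp, map_neg, map_pow, aeval_X, hβsq, neg_neg, ← Complex.coe_algebraMap,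
      aeval_algebraMap_apply, minpoly.aeval, map_zero]
  have hlt : ℚ⟮(α : ℂ)⟯ < ℚ⟮β⟯ := by
    refine SetLike.lt_iff_le_and_exists.mpr ⟨adjoin_simple_le_iff.mpr ?_, β,
      mem_adjoin_simple_self ℚ β, Complex.notMem_adjoin_ofReal ?_⟩
    · rw [show (α : ℂ) = -β ^ 2 by rw [hβsq, neg_neg]]
      exact neg_mem (pow_mem (mem_adjoin_simple_self ℚ β) 2)
    · simpa [β] using (Real.sqrt_pos.mpr (by linarith [h.1] : 0 < α)).ne'
  have : FiniteDimensional ℚ ℚ⟮β⟯ := adjoin.finiteDimensional hβ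
  have hdeg : (minpoly ℚ β).natDegree = 2 * (minpoly ℚ α).natDegree := by
    have hle := natDegree_le_of_dvd hdvd (comp_neg_X_sq_ne_zero hP0)
    rw [natDegree_comp_neg_X_sq] at hle
    have := finrank_eq_two_mul_of_lt hlt
    rw [adjoin.finrank hβ, adjoin.finrank hα, ← Complex.coe_algebraMap,
      minpoly.algebraMap_eq (algebraMap ℝ ℂ).injective] at this
    exact this hle
  refine (eq_of_monic_of_dvd_of_natDegree_le (minpoly.monic hβ)
    ((minpoly.monic h.isIntegral_rat).comp_neg_X_sq h.even_natDegree_minpoly) hdvd ?_).symm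
  rw [natDegree_comp_neg_X_sq, hdeg]

theorem eq_of_mem_roots_comp_neg_X_sq (h : IsSalemNumber α) {z : ℂ}
    (hz : z ∈ (((minpoly ℚ α).comp (-X ^ 2)).map (algebraMap ℚ ℂ)).roots) (hz1 : 1 < ‖z‖) :
    z = (√α : ℂ) * Complex.I ∨ z = -((√α : ℂ) * Complex.I) := by
  rw [mem_roots_map_comp_neg_X_sq (minpoly.ne_zero h.isIntegral_rat)] at hz
  have hzα : -z ^ 2 = α := by
    by_contra hne
    have hle := h.2.2.1 _ hz hne
    rw [norm_neg, norm_pow] at hle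
    nlinarith
  rw [← sq_eq_sq_iff_eq_or_eq_neg, Complex.ofReal_sqrt_mul_I_sq (by linarith [h.1]), ← hzα,
    neg_neg]

theorem exists_mem_roots_comp_neg_X_sq_norm_eq_one (h : IsSalemNumber α) :
    ∃ z ∈ (((minpoly ℚ α).comp (-X ^ 2)).map (algebraMap ℚ ℂ)).roots, ‖z‖ = 1 := by
  obtain ⟨w, hw, hw1⟩ := h.2.2.2
  obtain ⟨z, hz⟩ := IsAlgClosed.exists_pow_nat_eq (-w) two_pos
  refine ⟨z, ?_, ?_⟩
  · rwa [mem_roots_map_comp_neg_X_sq (minpoly.ne_zero h.isIntegral_rat), hz, neg_neg]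
  · rw [← pow_left_inj₀ (norm_nonneg z) zero_le_one two_ne_zero, ← norm_pow, hz, norm_neg, hw1,
      one_pow]

end IsSalemNumber

end

/-- If α is a Salem number with minimal polynomial P, then P(-X²) is the minimal
polynomial of a complex Salem number β with |β|² = α, and M(P(-X²)) = M(P). -/
theorem salem_to_complex_salem (α : ℝ) (h : IsSalemNumber α) :
    ∃ β : ℂ, IsComplexSalemNumber β ∧ ‖β‖ ^ 2 = α ∧
      minpoly ℚ β = (minpoly ℚ α).comp (-(Polynomial.X ^ 2)) ∧
      mahlerMeasure (((minpoly ℚ α).comp (-(Polynomial.X ^ 2))).map (algebraMap ℚ ℂ))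
        = mahlerMeasure ((minpoly ℚ α).map (algebraMap ℚ ℂ)) := by
  have hα : 0 < α := by linarith [h.1]
  have hP := minpoly.monic h.isIntegral_rat
  refine ⟨(√α : ℂ) * Complex.I, ⟨?_, h.isIntegral_sqrt_mul_I, ?_, ?_⟩, ?_,
    h.minpoly_sqrt_mul_I, ?_⟩
  · simpa using (Real.sqrt_pos.mpr hα).ne'
  · rw [h.minpoly_sqrt_mul_I, map_mul, Complex.conj_ofReal, Complex.conj_I, mul_neg]
    exact fun z hz hz1 => h.eq_of_mem_roots_comp_neg_X_sq hz hz1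
  · rw [h.minpoly_sqrt_mul_I]
    exact h.exists_mem_roots_comp_neg_X_sq_norm_eq_one
  · rw [norm_mul, Complex.norm_I, mul_one, Complex.norm_real,
      Real.norm_of_nonneg (Real.sqrt_nonneg α), Real.sq_sqrt hα.le]
  · rw [mahlerMeasure_eq_polynomial_mahlerMeasure_of_monic
        ((hP.comp_neg_X_sq h.even_natDegree_minpoly).map _),
      mahlerMeasure_eq_polynomial_mahlerMeasure_of_monic (hP.map _), Polynomial.map_comp,
      Polynomial.map_neg, Polynomial.map_pow, Polynomial.map_X,
      Polynomial.mahlerMeasure_comp_neg_X_sq]
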